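/- arXiv:1208.3733 — 3 statements merged into one kernel-verified Lean document; each statement's English description precedes it below -/
import Mathlib

section
/- Let C be a preadditive category, Y an object, and let N ≥ 1. Suppose we are given objects X, P₁,…,P_N, Q₁,…,Q_N and morphisms x : X → Y, aᵢ : Pᵢ → Y, bᵢ : Qᵢ → Y, xᵢ : Pᵢ → Y, together with morphisms φᵢ : X → Pᵢ, θᵢ : X → Qᵢ, and for each i and each j < i morphisms φᵢⱼ : Pᵢ → Pⱼ and θᵢⱼ : Pᵢ → Qⱼ, such that x = Σᵢ aᵢ∘φᵢ + bᵢ∘θᵢ and, for each i, xᵢ = aᵢ + Σ_{j<i} (aⱼ∘φᵢⱼ + bⱼ∘θᵢⱼ). Then there exist morphisms φ̄ᵢ : X → Pᵢ and θ̄ᵢ : X → Qᵢ such that x = Σᵢ xᵢ∘φ̄ᵢ + bᵢ∘θ̄ᵢ. -/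
/-!
The morphisms `X ⟶ Y` of the form `∑ cᵢ ≫ fᵢ` form an additive subgroup, the span of the
family `f`. By strong induction on `i`, every `c ≫ aᵢ` lies in the span of the `xᵢ` and the `bᵢ`,
because `c ≫ aᵢ = c ≫ xᵢ - ∑_{j<i} ((c ≫ φᵢⱼ) ≫ aⱼ + (c ≫ θᵢⱼ) ≫ bⱼ)`. Hence the span of the
`aᵢ` and `bᵢ`, which contains `x`, is contained in that of the `xᵢ` and `bᵢ`.
-/

open CategoryTheory Finset

namespace CategoryTheory.Preadditive

variable {C : Type*} [Category C] [Preadditive C] {ι : Type*} {X Y : C} {P : ι → C}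

def sumComp (X : C) (s : Finset ι) (f : ∀ i, P i ⟶ Y) : (∀ i, X ⟶ P i) →+ (X ⟶ Y) where
  toFun c := ∑ i ∈ s, c i ≫ f i
  map_zero' := by simp
  map_add' c d := by simp [sum_add_distrib]

def span (X : C) (s : Finset ι) (f : ∀ i, P i ⟶ Y) : AddSubgroup (X ⟶ Y) :=
  (sumComp X s f).range

theorem mem_span_iff {s : Finset ι} {f : ∀ i, P i ⟶ Y} {h : X ⟶ Y} :
    h ∈ span X s f ↔ ∃ c : ∀ i, X ⟶ P i, h = ∑ i ∈ s, c i ≫ f i := by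
  simp only [span, AddMonoidHom.mem_range, eq_comm (a := h)]
  rfl

theorem comp_mem_span [DecidableEq ι] {s : Finset ι} (f : ∀ i, P i ⟶ Y) {i : ι} (hi : i ∈ s)
    (c : X ⟶ P i) : c ≫ f i ∈ span X s f := by
  refine mem_span_iff.2 ⟨Pi.single i c, ?_⟩
  rw [sum_eq_single_of_mem i hi fun j _ hji => by simp [Pi.single_eq_of_ne hji]]
  simp

theorem span_le {s : Finset ι} {f : ∀ i, P i ⟶ Y} {T : AddSubgroup (X ⟶ Y)}
    (hT : ∀ i ∈ s, ∀ c : X ⟶ P i, c ≫ f i ∈ T) : span X s f ≤ T := by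
  rintro _ ⟨c, rfl⟩
  exact T.sum_mem fun i hi => hT i hi (c i)

theorem mem_span_sup_span_iff {Q : ι → C} {s : Finset ι} {f : ∀ i, P i ⟶ Y}
    {g : ∀ i, Q i ⟶ Y} {h : X ⟶ Y} :
    h ∈ span X s f ⊔ span X s g ↔
      ∃ (c : ∀ i, X ⟶ P i) (d : ∀ i, X ⟶ Q i), h = ∑ i ∈ s, (c i ≫ f i + d i ≫ g i) := by
  simp only [AddSubgroup.mem_sup, mem_span_iff, sum_add_distrib]
  constructor
  · rintro ⟨_, ⟨c, rfl⟩, _, ⟨d, rfl⟩, rfl⟩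
    exact ⟨c, d, rfl⟩
  · rintro ⟨c, d, rfl⟩
    exact ⟨_, ⟨c, rfl⟩, _, ⟨d, rfl⟩, rfl⟩

theorem span_sup_le_of_triangular {P Q : ℕ → C} {N : ℕ} (a xi : ∀ i, P i ⟶ Y)
    (b : ∀ i, Q i ⟶ Y) (φ' : ∀ i j, P i ⟶ P j) (θ' : ∀ i j, P i ⟶ Q j)
    (hxi : ∀ i < N, xi i = a i + ∑ j ∈ range i, (φ' i j ≫ a j + θ' i j ≫ b j)) :
    span X (range N) a ⊔ span X (range N) b ≤ span X (range N) xi ⊔ span X (range N) b := by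
  set T := span X (range N) xi ⊔ span X (range N) b
  have hb : ∀ i < N, ∀ c : X ⟶ Q i, c ≫ b i ∈ T := fun i hi c =>
    AddSubgroup.mem_sup_right (comp_mem_span b (mem_range.2 hi) c)
  have ha : ∀ i < N, ∀ c : X ⟶ P i, c ≫ a i ∈ T := by
    intro i
    induction i using Nat.strong_induction_on with
    | _ i ih =>
      intro hi c
      have hsub : c ≫ a i =
          c ≫ xi i - ∑ j ∈ range i, ((c ≫ φ' i j) ≫ a j + (c ≫ θ' i j) ≫ b j) := by
        simp [hxi i hi, Preadditive.comp_sum]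
      rw [hsub]
      refine sub_mem (AddSubgroup.mem_sup_left (comp_mem_span xi (mem_range.2 hi) c))
        (sum_mem fun j hj => ?_)
      have hji : j < i := mem_range.1 hj
      exact add_mem (ih j hji (hji.trans hi) _) (hb j (hji.trans hi) _)
  exact sup_le (span_le fun i hi => ha i (mem_range.1 hi)) le_sup_right

end CategoryTheory.Preadditive

theorem stmt1_general {C : Type*} [Category C] [Preadditive C]
    (X Y : C) (N : ℕ)
    (P Q : ℕ → C)
    (x : X ⟶ Y) (a : ∀ i, P i ⟶ Y) (b : ∀ i, Q i ⟶ Y) (xi : ∀ i, P i ⟶ Y)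
    (φ : ∀ i, X ⟶ P i) (θ : ∀ i, X ⟶ Q i)
    (φ' : ∀ i j, P i ⟶ P j) (θ' : ∀ i j, P i ⟶ Q j)
    (hx : x = ∑ i ∈ Finset.range N, (φ i ≫ a i + θ i ≫ b i))
    (hxi : ∀ i < N,
      xi i = a i + ∑ j ∈ Finset.range i, (φ' i j ≫ a j + θ' i j ≫ b j)) :
    ∃ (φb : ∀ i, X ⟶ P i) (θb : ∀ i, X ⟶ Q i),
      x = ∑ i ∈ Finset.range N, (φb i ≫ xi i + θb i ≫ b i) :=
  Preadditive.mem_span_sup_span_iff.1 <| Preadditive.span_sup_le_of_triangular a xi b φ' θ' hxi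
    (Preadditive.mem_span_sup_span_iff.2 ⟨φ, θ, hx⟩)

/-- Lemma 6.32: linear substitution in a preadditive category.
Given `x = ∑ aᵢ ∘ φᵢ + bᵢ ∘ θᵢ` and `xᵢ = aᵢ + ∑_{j<i} (aⱼ ∘ φᵢⱼ + bⱼ ∘ θᵢⱼ)`,
there are morphisms `φ̄ᵢ, θ̄ᵢ` with `x = ∑ xᵢ ∘ φ̄ᵢ + bᵢ ∘ θ̄ᵢ`. -/
theorem stmt1 {C : Type*} [Category C] [Preadditive C]
    (X Y : C) (N : ℕ) (hN : 1 ≤ N)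
    (P Q : ℕ → C)
    (x : X ⟶ Y) (a : ∀ i, P i ⟶ Y) (b : ∀ i, Q i ⟶ Y) (xi : ∀ i, P i ⟶ Y)
    (φ : ∀ i, X ⟶ P i) (θ : ∀ i, X ⟶ Q i)
    (φ' : ∀ i j, P i ⟶ P j) (θ' : ∀ i j, P i ⟶ Q j)
    (hx : x = ∑ i ∈ Finset.range N, (φ i ≫ a i + θ i ≫ b i))
    (hxi : ∀ i < N,
      xi i = a i + ∑ j ∈ Finset.range i, (φ' i j ≫ a j + θ' i j ≫ b j)) :
    ∃ (φb : ∀ i, X ⟶ P i) (θb : ∀ i, X ⟶ Q i),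
      x = ∑ i ∈ Finset.range N, (φb i ≫ xi i + θb i ≫ b i) :=
  stmt1_general X Y N P Q x a b xi φ θ φ' θ' hx hxi
end

section
/- (Homotopy Rotation Lemma) Let A and B be pointed topological spaces and let F : A × [0,1] × [0,1] → B be a continuous map satisfying F(a,0,t) = F(a,s,0) = F(*,s,t) = * for all a ∈ A and s,t ∈ [0,1], where * denotes the basepoints. Then there exists a continuous map H : A × [0,1] × [0,1] → B such that H(a,0,t) = F(a,1,t), H(a,1,t) = F(a,t,1), H(a,s,1) = F(a,1,1), and H(a,s,0) = H(*,s,t) = * for all a ∈ A and s,t ∈ [0,1]. -/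
open unitInterval

/-- Homotopy Rotation Lemma (Lemma 3.7): given `F : A × I × I → B` which is
the basepoint on the left side and bottom of the square and at the basepoint
of `A`, there is a map `H` rotating the top edge to the right edge, pivoting
at `(1,1)`. -/
theorem stmt3 {A B : Type*} [TopologicalSpace A] [TopologicalSpace B]
    (a₀ : A) (b₀ : B)
    (F : A × unitInterval × unitInterval → B) (hF : Continuous F)
    (hF0 : ∀ (a : A) (t : unitInterval), F (a, 0, t) = b₀)
    (hFs0 : ∀ (a : A) (s : unitInterval), F (a, s, 0) = b₀)
    (hFbase : ∀ (s t : unitInterval), F (a₀, s, t) = b₀) :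
    ∃ H : A × unitInterval × unitInterval → B, Continuous H ∧
      (∀ (a : A) (t : unitInterval), H (a, 0, t) = F (a, 1, t)) ∧
      (∀ (a : A) (t : unitInterval), H (a, 1, t) = F (a, t, 1)) ∧
      (∀ (a : A) (s : unitInterval), H (a, s, 1) = F (a, 1, 1)) ∧
      (∀ (a : A) (s : unitInterval), H (a, s, 0) = b₀) ∧
      (∀ (s t : unitInterval), H (a₀, s, t) = b₀) := by
  classical
  set pr : ℝ → unitInterval := Set.projIcc (0:ℝ) 1 zero_le_one with hpr
  refine ⟨fun p => F (p.1,
      pr ((1 - (p.2.2 : ℝ)) * max 0 (1 - 2 * (p.2.1 : ℝ)) + (p.2.2 : ℝ)),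
      pr ((1 - (p.2.2 : ℝ)) * max 0 (2 * (p.2.1 : ℝ) - 1) + (p.2.2 : ℝ))),
    ?_, ?_, ?_, ?_, ?_, ?_⟩
  · apply hF.comp
    refine Continuous.prodMk continuous_fst (Continuous.prodMk ?_ ?_) <;>
    · apply Continuous.subtype_mk
      fun_prop
  · intro a t
    have h1 : pr ((1 - (t : ℝ)) * max 0 (1 - 2 * ((0 : unitInterval) : ℝ)) + (t : ℝ)) = 1 := by
      norm_num [hpr, Set.projIcc]
    have h2 : pr ((1 - (t : ℝ)) * max 0 (2 * ((0 : unitInterval) : ℝ) - 1) + (t : ℝ)) = t := by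
      simp [hpr, Set.projIcc_val, max_eq_left (by norm_num : (2:ℝ) * 0 - 1 ≤ 0)]
    simp only [h1, h2]
  · intro a t
    have h1 : pr ((1 - (t : ℝ)) * max 0 (1 - 2 * ((1 : unitInterval) : ℝ)) + (t : ℝ)) = t := by
      simp [hpr, Set.projIcc_val, max_eq_left (by norm_num : (1:ℝ) - 2 * 1 ≤ 0)]
    have h2 : pr ((1 - (t : ℝ)) * max 0 (2 * ((1 : unitInterval) : ℝ) - 1) + (t : ℝ)) = 1 := by
      norm_num [hpr, Set.projIcc]
    simp only [h1, h2]
  · intro a s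
    have h1 : pr ((1 - ((1 : unitInterval) : ℝ)) * max 0 (1 - 2 * (s : ℝ)) + ((1:unitInterval) : ℝ)) = 1 := by
      norm_num [hpr, Set.projIcc]
    have h2 : pr ((1 - ((1 : unitInterval) : ℝ)) * max 0 (2 * (s : ℝ) - 1) + ((1:unitInterval) : ℝ)) = 1 := by
      norm_num [hpr, Set.projIcc]
    simp only [h1, h2]
  · intro a s
    rcases le_or_gt (s : ℝ) (1/2) with hs | hs
    · have h2 : pr ((1 - ((0 : unitInterval) : ℝ)) * max 0 (2 * (s : ℝ) - 1) + ((0:unitInterval) : ℝ)) = 0 := by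
        have : max (0:ℝ) (2 * (s : ℝ) - 1) = 0 := max_eq_left (by linarith)
        simp [hpr, this, Set.projIcc]
      simp only [h2]
      exact hFs0 _ _
    · have h1 : pr ((1 - ((0 : unitInterval) : ℝ)) * max 0 (1 - 2 * (s : ℝ)) + ((0:unitInterval) : ℝ)) = 0 := by
        have : max (0:ℝ) (1 - 2 * (s : ℝ)) = 0 := max_eq_left (by linarith)
        simp [hpr, this, Set.projIcc]
      simp only [h1]
      exact hF0 _ _
  · intro s t
    exact hFbase _ _
end

section
/- Let p be a prime and r ≥ 1. Let R be the quotient of the polynomial ring ℤ[v₀, v₁, v₂, …] by the ideal generated by the elements v_i^p − p·v_{i+1} (for all i ≥ 0) together with p^r·v₀. Grade R by assigning v_i the weight p^i. Then for each i ≥ 0 the homogeneous component of R of weight p^i is a cyclic group of order p^{r+i}, generated by the image of v_i. -/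
open MvPolynomial

/-!
Reducing a monomial with `vⱼ ^ p = p * vⱼ₊₁` lowers its degree and keeps its weight, and a
monomial of weight `p ^ i` whose exponents are all `< p` is `vᵢ` itself (uniqueness of base `p`
digits). Hence the weight `p ^ i` part of the quotient is generated by `vᵢ`, and the same relation
turns `p ^ r * v₀ = 0` into `p ^ (r + i) * vᵢ = 0`.

For the lower bound send `vⱼ ↦ y ^ (p ^ j) / p ^ v_p((p ^ j)!)` in `ℚ[y]`. Since
`v_p((p ^ (j + 1))!) = p * v_p((p ^ j)!) + 1` this kills `vⱼ ^ p - p * vⱼ₊₁`, and the image lies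
in the ring of polynomials whose coefficient of `y ^ d` is in `p ^ (-v_p(d!)) ℤ`, a ring because
`d! e!` divides `(d + e)!`. So the ideal lands in `p ^ r y` times that ring, and comparing
coefficients of `y ^ (p ^ i)` using `v_p((p ^ i)!) = v_p((p ^ i - 1)!) + i` shows that
`p ^ (r + i - 1) * vᵢ` is not in the ideal.
-/

theorem Finsupp.eq_single_of_weight_eq_pow {p i : ℕ} (hp : 1 < p) {a : ℕ →₀ ℕ}
    (ha : ∀ j, a j < p) (hw : weight (p ^ ·) a = p ^ i) : a = single i 1 := by
  have hsupp : a.support.Nonempty := by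
    rw [support_nonempty_iff]
    rintro rfl
    exact (pow_pos (by omega) i).ne hw
  set j := a.support.min' hsupp
  have haj : a j ≠ 0 := mem_support_iff.mp (a.support.min'_mem hsupp)
  have hsplit : weight (p ^ ·) a = a j * p ^ j + weight (p ^ ·) (a.erase j) := by
    conv_lhs => rw [← single_add_erase j a]
    rw [map_add, weight_single, smul_eq_mul]
  have hdvd : p ^ (j + 1) ∣ weight (p ^ ·) (a.erase j) := by
    rw [weight_apply]
    refine Finset.dvd_sum fun k hk => (pow_dvd_pow p ?_).mul_left _
    rw [support_erase, Finset.mem_erase] at hk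
    exact lt_of_le_of_ne (a.support.min'_le k hk.2) (Ne.symm hk.1)
  -- all other indices in the support exceed `j`, so `p ∣ a j` unless `j = i`
  have hji : j = i := by
    have hle : j ≤ i := by
      rw [← Nat.pow_dvd_pow_iff_le_right hp, ← hw, hsplit]
      exact dvd_add (dvd_mul_left _ _) ((pow_dvd_pow p j.le_succ).trans hdvd)
    by_contra hne
    have : p * p ^ j ∣ a j * p ^ j := by
      rw [← pow_succ', ← Nat.dvd_add_left hdvd, ← hsplit, hw]
      exact pow_dvd_pow p (by omega)
    exact (ha j).not_ge (Nat.le_of_dvd (Nat.pos_of_ne_zero haj)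
      (Nat.dvd_of_mul_dvd_mul_right (by positivity) this))
  subst hji
  have hpj : 0 < p ^ j := by positivity
  rw [hw] at hsplit
  have hrest : weight (p ^ ·) (a.erase j) = 0 := by
    have := Nat.le_mul_of_pos_left (p ^ j) (Nat.pos_of_ne_zero haj)
    omega
  rw [hrest, add_zero] at hsplit
  have : NonTorsionWeight ℕ (p ^ · : ℕ → ℕ) :=
    nonTorsionWeight_of ℕ _ fun k => (pow_pos (by omega) k).ne'
  have haj1 : a j = 1 := Nat.eq_of_mul_eq_mul_right hpj (by rw [one_mul, ← hsplit])
  rw [← single_add_erase j a, (weight_eq_zero_iff_eq_zero (p ^ ·)).mp hrest, add_zero, haj1]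

theorem AddSubgroup.mul_mem_zmultiples_mul {R : Type*} [CommRing R] {x y a b : R}
    (ha : a ∈ zmultiples x) (hb : b ∈ zmultiples y) : a * b ∈ zmultiples (x * y) := by
  obtain ⟨m, rfl⟩ := ha
  obtain ⟨n, rfl⟩ := hb
  exact ⟨m * n, by simp only [zsmul_eq_mul, Int.cast_mul]; ring⟩

theorem addOrderOf_eq_prime_pow_of_forall_lt {G : Type*} [AddMonoid G] {x : G} {p n : ℕ}
    (hp : p.Prime) (h : p ^ n • x = 0) (hlt : ∀ k < n, p ^ k • x ≠ 0) :
    addOrderOf x = p ^ n := by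
  obtain ⟨m, hm, hx⟩ := (Nat.dvd_prime_pow hp).mp (addOrderOf_dvd_of_nsmul_eq_zero h)
  rcases hm.lt_or_eq with hmn | rfl
  · exact absurd (hx ▸ addOrderOf_nsmul_eq_zero x) (hlt m hmn)
  · exact hx

section PowRelation

variable {S : Type*} [CommRing S] {p : ℕ}

theorem monomial_mem_zmultiples_of_weight_eq_pow (hp : 1 < p) {φ : MvPolynomial ℕ ℤ →+* S}
    (hφ : ∀ j, φ (X j) ^ p = p * φ (X (j + 1))) {i : ℕ} {a : ℕ →₀ ℕ}
    (ha : Finsupp.weight (p ^ ·) a = p ^ i) :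
    φ (monomial a 1) ∈ AddSubgroup.zmultiples (φ (X i)) := by
  induction hn : a.degree using Nat.strong_induction_on generalizing a with
  | _ n ih =>
  by_cases hlt : ∀ j, a j < p
  · rw [Finsupp.eq_single_of_weight_eq_pow hp hlt ha, ← X_pow_eq_monomial, pow_one]
    exact AddSubgroup.mem_zmultiples _
  push Not at hlt
  obtain ⟨j, hj⟩ := hlt
  obtain ⟨b, rfl⟩ : ∃ b, a = b + Finsupp.single j p :=
    ⟨a - Finsupp.single j p, (tsub_add_cancel_of_le (Finsupp.single_le_iff.mpr hj)).symm⟩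
  have hrel : φ (monomial (b + Finsupp.single j p) 1) =
      (p : ℤ) • φ (monomial (b + Finsupp.single (j + 1) 1) 1) := by
    simp only [monomial_add_single, map_mul, map_pow, hφ, zsmul_eq_mul]
    push_cast
    ring
  rw [hrel]
  refine AddSubgroup.zsmul_mem _ (ih _ ?_ ?_ rfl) _
  · rw [← hn, map_add, map_add, Finsupp.degree_single, Finsupp.degree_single]
    omega
  · rw [← ha, map_add, map_add, Finsupp.weight_single, Finsupp.weight_single, pow_succ]
    simp [mul_comm]

theorem mem_zmultiples_of_isWeightedHomogeneous (hp : 1 < p) {φ : MvPolynomial ℕ ℤ →+* S}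
    (hφ : ∀ j, φ (X j) ^ p = p * φ (X (j + 1))) {i : ℕ} {f : MvPolynomial ℕ ℤ}
    (hf : IsWeightedHomogeneous (p ^ ·) f (p ^ i)) :
    φ f ∈ AddSubgroup.zmultiples (φ (X i)) := by
  rw [f.as_sum, map_sum]
  refine AddSubgroup.sum_mem _ fun a ha => ?_
  rw [← mul_one (coeff a f), ← smul_eq_mul, ← smul_monomial, map_zsmul]
  exact AddSubgroup.zsmul_mem _
    (monomial_mem_zmultiples_of_weight_eq_pow hp hφ (hf (mem_support_iff.mp ha))) _

theorem pow_add_mul_eq_zero {v : ℕ → S} (hp : p ≠ 0) (hv : ∀ j, v j ^ p = p * v (j + 1))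
    {r : ℕ} (h0 : (p : S) ^ r * v 0 = 0) (i : ℕ) : (p : S) ^ (r + i) * v i = 0 := by
  induction i with
  | zero => exact h0
  | succ i ih =>
    calc (p : S) ^ (r + (i + 1)) * v (i + 1) = (p : S) ^ (r + i) * v i * v i ^ (p - 1) := by
          rw [mul_assoc, mul_pow_sub_one hp, hv]
          ring
      _ = 0 := by rw [ih, zero_mul]

end PowRelation

noncomputable def relationIdeal (p r : ℕ) : Ideal (MvPolynomial ℕ ℤ) :=
  Ideal.span (Set.range (fun i => X i ^ p - C (p : ℤ) * X (i + 1)) ∪ {C ((p : ℤ) ^ r) * X 0})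

theorem X_pow_sub_mem_relationIdeal (p r j : ℕ) :
    X j ^ p - C (p : ℤ) * X (j + 1) ∈ relationIdeal p r :=
  Ideal.subset_span (Or.inl ⟨j, rfl⟩)

theorem C_pow_mul_X_zero_mem_relationIdeal (p r : ℕ) :
    C ((p : ℤ) ^ r) * X 0 ∈ relationIdeal p r :=
  Ideal.subset_span (Or.inr rfl)

section DividedPowers

open scoped Nat

variable (p : ℕ)

theorem zmultiples_inv_pow_mono (hp : p ≠ 0) {m n : ℕ} (h : m ≤ n) :
    AddSubgroup.zmultiples ((p : ℚ) ^ m)⁻¹ ≤ AddSubgroup.zmultiples ((p : ℚ) ^ n)⁻¹ := by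
  rw [AddSubgroup.zmultiples_le]
  refine ⟨(p : ℤ) ^ (n - m), ?_⟩
  have : (p : ℚ) ≠ 0 := Nat.cast_ne_zero.mpr hp
  simp only [zsmul_eq_mul, Int.cast_pow, Int.cast_natCast]
  field_simp
  rw [← pow_add, Nat.sub_add_cancel h]

noncomputable def toDividedPowers : MvPolynomial ℕ ℤ →ₐ[ℤ] Polynomial ℚ :=
  aeval fun j => Polynomial.monomial (p ^ j) ((p : ℚ) ^ padicValNat p (p ^ j)!)⁻¹

variable [Fact p.Prime]

theorem padicValNat_factorial_add_le (a b : ℕ) :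
    padicValNat p a ! + padicValNat p b ! ≤ padicValNat p (a + b)! := by
  rw [← padicValNat.mul (Nat.factorial_ne_zero a) (Nat.factorial_ne_zero b),
    ← padicValNat_dvd_iff_le (Nat.factorial_ne_zero _)]
  exact pow_padicValNat_dvd.trans (Nat.factorial_mul_factorial_dvd_factorial_add a b)

theorem padicValNat_factorial_pow_succ (j : ℕ) :
    padicValNat p (p ^ (j + 1))! = p * padicValNat p (p ^ j)! + 1 := by
  induction j with
  | zero => simpa using padicValNat_factorial_mul (p := p) 1
  | succ j ih =>
    calc padicValNat p (p ^ (j + 2))! = padicValNat p (p ^ (j + 1))! + p ^ (j + 1) := by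
          rw [pow_succ' p (j + 1), padicValNat_factorial_mul]
      _ = p * (padicValNat p (p ^ j)! + p ^ j) + 1 := by rw [ih, pow_succ']; ring
      _ = p * padicValNat p (p ^ (j + 1))! + 1 := by rw [pow_succ' p j, padicValNat_factorial_mul]

theorem padicValNat_factorial_pow_sub_one (i : ℕ) :
    padicValNat p (p ^ i - 1)! + i = padicValNat p (p ^ i)! := by
  have hpi : p ^ i ≠ 0 := pow_ne_zero i (Fact.out : p.Prime).ne_zero
  rw [← Nat.mul_factorial_pred hpi, padicValNat.mul hpi (Nat.factorial_ne_zero _),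
    padicValNat.prime_pow, add_comm]

def dividedPowerSubring : Subring (Polynomial ℚ) where
  carrier := {g | ∀ d, g.coeff d ∈ AddSubgroup.zmultiples ((p : ℚ) ^ padicValNat p d !)⁻¹}
  mul_mem' {f g} hf hg d := by
    rw [Polynomial.coeff_mul]
    refine AddSubgroup.sum_mem _ fun x hx => ?_
    rw [Finset.HasAntidiagonal.mem_antidiagonal] at hx
    rw [← hx]
    refine zmultiples_inv_pow_mono p (Fact.out : p.Prime).ne_zero
      (padicValNat_factorial_add_le p x.1 x.2) ?_
    rw [pow_add, mul_inv]
    exact AddSubgroup.mul_mem_zmultiples_mul (hf x.1) (hg x.2)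
  one_mem' d := by
    rw [Polynomial.coeff_one]
    split_ifs with h
    · subst h
      simp
    · exact zero_mem _
  add_mem' hf hg d := by
    rw [Polynomial.coeff_add]
    exact add_mem (hf d) (hg d)
  zero_mem' d := zero_mem _
  neg_mem' hf d := by
    rw [Polynomial.coeff_neg]
    exact neg_mem (hf d)

theorem toDividedPowers_X_pow_sub (j : ℕ) :
    toDividedPowers p (X j ^ p - C (p : ℤ) * X (j + 1)) = 0 := by
  have hp : (p : ℚ) ≠ 0 := by exact_mod_cast (Fact.out : p.Prime).ne_zero
  simp only [toDividedPowers, map_sub, map_pow, map_mul, aeval_X, aeval_C, Polynomial.monomial_pow,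
    padicValNat_factorial_pow_succ, sub_eq_zero]
  rw [eq_intCast, Int.cast_natCast, ← map_natCast Polynomial.C, Polynomial.C_mul_monomial,
    pow_succ]
  congr 1
  rw [inv_pow, ← pow_mul, mul_comm _ p, pow_succ]
  field_simp

theorem toDividedPowers_mem (f : MvPolynomial ℕ ℤ) :
    toDividedPowers p f ∈ dividedPowerSubring p := by
  induction f using MvPolynomial.induction_on with
  | C a => simp [toDividedPowers]
  | add f g hf hg => rw [map_add]; exact add_mem hf hg
  | mul_X f j hf =>
    refine map_mul (toDividedPowers p) f (X j) ▸ mul_mem hf fun d => ?_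
    rw [toDividedPowers, aeval_X, Polynomial.coeff_monomial]
    split_ifs with h
    · subst h
      exact AddSubgroup.mem_zmultiples _
    · exact zero_mem _

theorem exists_toDividedPowers_eq_of_mem_relationIdeal {r : ℕ} {x : MvPolynomial ℕ ℤ}
    (hx : x ∈ relationIdeal p r) : ∃ g ∈ dividedPowerSubring p,
      toDividedPowers p x = Polynomial.C ((p : ℚ) ^ r) * Polynomial.X * g := by
  induction hx using Submodule.span_induction with
  | mem x hx =>
    rcases hx with ⟨j, rfl⟩ | rfl
    · exact ⟨0, zero_mem _, by rw [toDividedPowers_X_pow_sub, mul_zero]⟩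
    · exact ⟨1, one_mem _, by simp [toDividedPowers, Polynomial.monomial_one_one_eq_X]⟩
  | zero => exact ⟨0, zero_mem _, by rw [map_zero, mul_zero]⟩
  | add x y _ _ hx hy =>
    obtain ⟨g, hg, hgx⟩ := hx
    obtain ⟨h, hh, hhy⟩ := hy
    exact ⟨g + h, add_mem hg hh, by rw [map_add, hgx, hhy, mul_add]⟩
  | smul a x _ hx =>
    obtain ⟨g, hg, hgx⟩ := hx
    exact ⟨toDividedPowers p a * g, mul_mem (toDividedPowers_mem p a) hg,
      by rw [smul_eq_mul, map_mul, hgx]; ring⟩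

theorem natCast_pow_mul_X_notMem_relationIdeal {r i k : ℕ} (hk : k < r + i) :
    ((p ^ k : ℕ) : MvPolynomial ℕ ℤ) * X i ∉ relationIdeal p r := by
  intro h
  obtain ⟨g, hg, hgx⟩ := exists_toDividedPowers_eq_of_mem_relationIdeal p h
  obtain ⟨z, hz⟩ := hg (p ^ i - 1)
  have hp : (p : ℚ) ≠ 0 := by exact_mod_cast (Fact.out : p.Prime).ne_zero
  have hcoeff := congrArg (Polynomial.coeff · (p ^ i - 1 + 1)) hgx
  simp only [mul_assoc, Polynomial.coeff_C_mul, Polynomial.coeff_X_mul, ← hz] at hcoeff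
  simp only [map_mul, map_natCast, toDividedPowers, aeval_X, Polynomial.coeff_natCast_mul,
    Nat.sub_add_cancel (Nat.one_le_pow _ _ (Fact.out : p.Prime).pos),
    Polynomial.coeff_monomial_same, ← padicValNat_factorial_pow_sub_one, zsmul_eq_mul] at hcoeff
  have hZ : (p : ℚ) ^ k = z * p ^ (r + i) := by
    field_simp at hcoeff
    push_cast at hcoeff
    refine mul_right_cancel₀ (pow_ne_zero (padicValNat p (p ^ i - 1)!) hp) ?_
    rw [hcoeff]
    ring
  have hZ' : (p : ℤ) ^ k = z * p ^ (r + i) := by exact_mod_cast hZ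
  have : p ^ (r + i) ∣ p ^ k := by exact_mod_cast Dvd.intro_left z hZ'.symm
  exact hk.not_ge ((Nat.pow_dvd_pow_iff_le_right (Fact.out : p.Prime).one_lt).mp this)

end DividedPowers

theorem stmt8_general (p : ℕ) (hp : p.Prime) (r : ℕ)
    (I : Ideal (MvPolynomial ℕ ℤ))
    (hI : I = Ideal.span
      (Set.range (fun i => X i ^ p - C (p : ℤ) * X (i + 1)) ∪
        {C ((p : ℤ) ^ r) * X 0}))
    (i : ℕ) :
    AddSubgroup.map (Ideal.Quotient.mk I).toAddMonoidHom
        ((weightedHomogeneousSubmodule ℤ (fun j => p ^ j) (p ^ i)).toAddSubgroup)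
      = AddSubgroup.zmultiples (Ideal.Quotient.mk I (X i)) ∧
    addOrderOf (Ideal.Quotient.mk I (X i)) = p ^ (r + i) := by
  have : Fact p.Prime := ⟨hp⟩
  change I = relationIdeal p r at hI
  subst hI
  have hv : ∀ j, Ideal.Quotient.mk (relationIdeal p r) (X j) ^ p =
      p * Ideal.Quotient.mk (relationIdeal p r) (X (j + 1)) := fun j => by
    simpa [sub_eq_zero] using
      Ideal.Quotient.eq_zero_iff_mem.mpr (X_pow_sub_mem_relationIdeal p r j)
  refine ⟨le_antisymm ?_ ?_, addOrderOf_eq_prime_pow_of_forall_lt hp ?_ fun k hk => ?_⟩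
  · rintro _ ⟨f, hf, rfl⟩
    exact mem_zmultiples_of_isWeightedHomogeneous hp.one_lt hv hf
  · rw [AddSubgroup.zmultiples_le]
    exact ⟨X i, isWeightedHomogeneous_X ℤ _ i, rfl⟩
  · rw [nsmul_eq_mul, Nat.cast_pow]
    exact pow_add_mul_eq_zero hp.ne_zero hv (by
      simpa using Ideal.Quotient.eq_zero_iff_mem.mpr (C_pow_mul_X_zero_mem_relationIdeal p r)) i
  · rw [nsmul_eq_mul, ← map_natCast (Ideal.Quotient.mk _), ← map_mul, Ne,
      Ideal.Quotient.eq_zero_iff_mem]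
    exact natCast_pow_mul_X_notMem_relationIdeal p hk

/-- Theorem 2.14(f) (abstract ring): in the quotient of `ℤ[v₀, v₁, …]` by the
relations `vᵢ^p = p·vᵢ₊₁` and `p^r·v₀ = 0`, graded by giving `vᵢ` weight `p^i`,
the homogeneous component of weight `p^i` is cyclic of order `p^{r+i}`,
generated by the image of `vᵢ`. -/
theorem stmt8 (p : ℕ) (hp : p.Prime) (r : ℕ) (hr : 1 ≤ r)
    (I : Ideal (MvPolynomial ℕ ℤ))
    (hI : I = Ideal.span
      (Set.range (fun i => X i ^ p - C (p : ℤ) * X (i + 1)) ∪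
        {C ((p : ℤ) ^ r) * X 0}))
    (i : ℕ) :
    AddSubgroup.map (Ideal.Quotient.mk I).toAddMonoidHom
        ((weightedHomogeneousSubmodule ℤ (fun j => p ^ j) (p ^ i)).toAddSubgroup)
      = AddSubgroup.zmultiples (Ideal.Quotient.mk I (X i)) ∧
    addOrderOf (Ideal.Quotient.mk I (X i)) = p ^ (r + i) :=
  stmt8_general p hp r I hI i
end
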